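/- arXiv:1104.0359 — 2 statements merged into one kernel-verified Lean document; each statement's English description precedes it below -/
import Mathlib

section
/- Let non-negative random variables L \in RV_{-\beta} and S \in RV_{-\beta} (equal tail indices, \beta > 0) satisfy the negligible joint tail condition. Let U be a random variable with distribution function F_U(x) = (F_L(x) + F_S(x))/2. Then VaR_\alpha(L + S) \sim VaR_{1 - (1-\alpha)/2}(U) as \alpha \to 1. -/
open MeasureTheory ProbabilityTheory Filter Topology

/-- Tail probability function of a random variable. -/
noncomputable def tail {Ω : Type*} [MeasurableSpace Ω] (P : Measure Ω) (X : Ω → ℝ) (x : ℝ) : ℝ :=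
  (P {ω | x < X ω}).toReal

/-- Distribution function of a random variable. -/
noncomputable def cdf' {Ω : Type*} [MeasurableSpace Ω] (P : Measure Ω) (X : Ω → ℝ) (x : ℝ) : ℝ :=
  (P {ω | X ω ≤ x}).toReal

/-- Value at Risk: the α-quantile. -/
noncomputable def VaR {Ω : Type*} [MeasurableSpace Ω] (P : Measure Ω) (X : Ω → ℝ) (α : ℝ) : ℝ :=
  sInf {x : ℝ | α ≤ cdf' P X x}

/-- f is regularly varying (at infinity) with index k. -/
def RegVary (f : ℝ → ℝ) (k : ℝ) : Prop :=
  ∀ t : ℝ, 0 < t → Tendsto (fun x => f (t * x) / f x) atTop (𝓝 (t ^ k))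


/-! Let `H` be the tail of `L + S` and `T = F̄_L + F̄_S`. The event `{L + S > x}` contains
`{L > x} ∪ {S > x}` and is contained in `{L > s x} ∪ {S > s x} ∪ {L > (1 - s) x, S > (1 - s) x}`,
so negligibility of the joint tail and regular variation of `T` give `H ~ T`. Both quantiles are
generalized inverses at level `1 - α`, of `H` and (since `F̄_U = T / 2`) of `T`, and generalized
inverses of asymptotically equivalent tails, one of which is regularly varying with negative
index, are asymptotically equivalent. -/

section Tail

variable {Ω : Type*} [MeasurableSpace Ω] (P : Measure Ω) {X Y : Ω → ℝ}

lemma tail_nonneg (x : ℝ) : 0 ≤ tail P X x := ENNReal.toReal_nonneg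

lemma tail_eq_one_sub_cdf' [IsProbabilityMeasure P] (hX : Measurable X) (x : ℝ) :
    tail P X x = 1 - cdf' P X x := by
  have hcompl : {ω | X ω ≤ x}ᶜ = {ω | x < X ω} := by ext ω; simp
  rw [tail, cdf', ← measureReal_def, ← measureReal_def, ← hcompl,
    probReal_compl_eq_one_sub (measurableSet_le hX measurable_const)]

lemma tendsto_tail_atTop [IsProbabilityMeasure P] (hX : Measurable X) :
    Tendsto (tail P X) atTop (𝓝 0) := by
  have hcdf : Tendsto (cdf' P X) atTop (𝓝 1) := by
    have h := tendsto_measure_Iic_atTop (P.map X)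
    simp only [Measure.map_apply hX measurableSet_Iic, Measure.map_apply hX MeasurableSet.univ,
      Set.preimage_univ, measure_univ] at h
    exact (ENNReal.tendsto_toReal ENNReal.one_ne_top).comp h
  rw [show tail P X = fun x => 1 - cdf' P X x from funext (tail_eq_one_sub_cdf' P hX)]
  simpa using (tendsto_const_nhds (x := (1 : ℝ))).sub hcdf

variable [IsFiniteMeasure P]

lemma tail_antitone : Antitone (tail P X) := fun _ _ hxy =>
  measureReal_mono fun _ h => hxy.trans_lt h

noncomputable def jointTail (X Y : Ω → ℝ) (x : ℝ) : ℝ := (P {ω | x < X ω ∧ x < Y ω}).toReal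

lemma tail_le_tail_add (hY0 : ∀ ω, 0 ≤ Y ω) (x : ℝ) :
    tail P X x ≤ tail P (fun ω => X ω + Y ω) x :=
  measureReal_mono fun ω (h : x < X ω) => h.trans_le (le_add_of_nonneg_right (hY0 ω))

lemma tail_add_tail_le (hY : Measurable Y) (hX0 : ∀ ω, 0 ≤ X ω) (hY0 : ∀ ω, 0 ≤ Y ω)
    (x : ℝ) :
    tail P X x + tail P Y x ≤ tail P (fun ω => X ω + Y ω) x + jointTail P X Y x := by
  have hunion : {ω | x < X ω} ∪ {ω | x < Y ω} ⊆ {ω | x < X ω + Y ω} := by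
    rintro ω (h | h)
    · exact h.trans_le (le_add_of_nonneg_right (hY0 ω))
    · exact h.trans_le (le_add_of_nonneg_left (hX0 ω))
  simp only [tail, jointTail, ← measureReal_def]
  rw [← measureReal_union_add_inter (measurableSet_lt measurable_const hY)]
  exact add_le_add_left (measureReal_mono hunion) _

lemma tail_add_le (s x : ℝ) :
    tail P (fun ω => X ω + Y ω) x ≤
      tail P X (s * x) + tail P Y (s * x) + jointTail P X Y ((1 - s) * x) := by
  have hcover : {ω | x < X ω + Y ω} ⊆
      {ω | s * x < X ω} ∪ {ω | s * x < Y ω} ∪ {ω | (1 - s) * x < X ω ∧ (1 - s) * x < Y ω} := by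
    intro ω (hω : x < X ω + Y ω)
    by_contra! h
    simp only [Set.mem_union, Set.mem_ofPred_eq, not_or, not_and, not_lt] at h
    obtain ⟨⟨hXs, hYs⟩, hjoint⟩ := h
    rcases le_or_gt (X ω) ((1 - s) * x) with hX | hX
    · linarith
    · linarith [hjoint hX]
  simp only [tail, jointTail, ← measureReal_def]
  exact (measureReal_mono hcover).trans <|
    (measureReal_union_le _ _).trans (add_le_add_left (measureReal_union_le _ _) _)

end Tail

lemma abs_add_div_add_sub_le {p q a b : ℝ} (ha : 0 < a) (hb : 0 < b) (c : ℝ) :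
    |(p + q) / (a + b) - c| ≤ |p / a - c| + |q / b - c| := by
  have hab : 0 < a + b := add_pos ha hb
  have hmix : (p + q) / (a + b) - c = (a * (p / a - c) + b * (q / b - c)) / (a + b) := by
    field_simp
    ring
  rw [hmix, abs_div, abs_of_pos hab, div_le_iff₀ hab]
  calc |a * (p / a - c) + b * (q / b - c)|
      ≤ a * |p / a - c| + b * |q / b - c| :=
        (abs_add_le _ _).trans_eq (by rw [abs_mul, abs_mul, abs_of_pos ha, abs_of_pos hb])
    _ ≤ (|p / a - c| + |q / b - c|) * (a + b) := by
        nlinarith [abs_nonneg (p / a - c), abs_nonneg (q / b - c)]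

lemma exists_rpow_lt_of_one_lt (k : ℝ) {c : ℝ} (hc : 1 < c) :
    ∃ s ∈ Set.Ioo 0 1, s ^ k < c := by
  have hcont : ∀ᶠ s in 𝓝[<] (1 : ℝ), s ^ k < c :=
    nhdsWithin_le_nhds <| (Real.continuousAt_rpow_const 1 k (Or.inl one_ne_zero)).eventually
      (eventually_lt_nhds (by simpa using hc))
  have hmem : ∀ᶠ s in 𝓝[<] (1 : ℝ), s ∈ Set.Ioo 0 1 := Ioo_mem_nhdsLT zero_lt_one
  obtain ⟨s, hs, hsc⟩ := (hmem.and hcont).exists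
  exact ⟨s, hs, hsc⟩

namespace RegVary

variable {f g : ℝ → ℝ} {k : ℝ}

lemma pos_of_antitone (hf : RegVary f k) (hanti : Antitone f) (hnonneg : ∀ x, 0 ≤ f x)
    (x : ℝ) : 0 < f x := by
  refine (hnonneg x).lt_of_ne fun hx => (Real.rpow_pos_of_pos two_pos k).ne' ?_
  have hzero : ∀ y, x ≤ y → f y = 0 := fun y hy => le_antisymm (hx ▸ hanti hy) (hnonneg y)
  refine tendsto_nhds_unique (hf 2 two_pos) (tendsto_const_nhds.congr' ?_)
  filter_upwards [eventually_ge_atTop x] with y hy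
  rw [hzero y hy, div_zero]

lemma add (hf : RegVary f k) (hg : RegVary g k) (hfpos : ∀ x, 0 < f x)
    (hgpos : ∀ x, 0 < g x) : RegVary (fun x => f x + g x) k := by
  intro t ht
  have hsum := (tendsto_iff_dist_tendsto_zero.1 (hf t ht)).add
    (tendsto_iff_dist_tendsto_zero.1 (hg t ht))
  rw [add_zero] at hsum
  exact tendsto_iff_dist_tendsto_zero.2 <| squeeze_zero (fun _ => dist_nonneg)
    (fun x => abs_add_div_add_sub_le (hfpos x) (hgpos x) _) hsum

lemma of_tendsto_div (hg : RegVary g k) (hgpos : ∀ x, 0 < g x)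
    (hfg : Tendsto (fun x => f x / g x) atTop (𝓝 1)) : RegVary f k := by
  have hgf : Tendsto (fun x => g x / f x) atTop (𝓝 1) := by
    simpa using hfg.inv₀ one_ne_zero
  intro t ht
  have hprod := ((hfg.comp (tendsto_id.const_mul_atTop ht)).mul (hg t ht)).mul hgf
  rw [one_mul, mul_one] at hprod
  refine hprod.congr fun x => ?_
  simp only [Function.comp_apply, id]
  rw [div_mul_div_cancel₀ (hgpos _).ne', div_mul_div_cancel₀ (hgpos _).ne']

lemma eventually_comp_mul_le {β : ℝ} (hβ : 0 < β) (hf : RegVary f (-β))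
    (hfpos : ∀ x, 0 < f x) (hgpos : ∀ x, 0 < g x)
    (hfg : Tendsto (fun x => f x / g x) atTop (𝓝 1)) {t : ℝ} (ht : 1 < t) :
    ∀ᶠ x in atTop, f (t * x) ≤ g x := by
  have hlim := (hf t (zero_lt_one.trans ht)).mul hfg
  rw [mul_one] at hlim
  filter_upwards [hlim.eventually (eventually_lt_nhds
    (Real.rpow_lt_one_of_one_lt_of_neg ht (neg_neg_of_pos hβ)))] with x hx
  rw [div_mul_div_cancel₀ (hfpos x).ne', div_lt_one (hgpos x)] at hx
  exact hx.le

lemma tendsto_comp_mul_div {J : ℝ → ℝ} (hf : RegVary f k) (hfpos : ∀ x, 0 < f x)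
    (hJ : Tendsto (fun x => J x / f x) atTop (𝓝 0)) {c : ℝ} (hc : 0 < c) :
    Tendsto (fun x => J (c * x) / f x) atTop (𝓝 0) := by
  have hprod := (hJ.comp (tendsto_id.const_mul_atTop hc)).mul (hf c hc)
  rw [zero_mul] at hprod
  refine hprod.congr fun x => ?_
  simp only [Function.comp_apply, id]
  rw [div_mul_div_cancel₀ (hfpos _).ne']

lemma tendsto_div_of_le_add {H T J : ℝ → ℝ} {k : ℝ} (hT : RegVary T k)
    (hTpos : ∀ x, 0 < T x) (hJ : Tendsto (fun x => J x / T x) atTop (𝓝 0))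
    (hlow : ∀ x, T x ≤ H x + J x) (hup : ∀ s x, H x ≤ T (s * x) + J ((1 - s) * x)) :
    Tendsto (fun x => H x / T x) atTop (𝓝 1) := by
  refine tendsto_order.2 ⟨fun c hc => ?_, fun c hc => ?_⟩
  · have hlim : Tendsto (fun x => 1 - J x / T x) atTop (𝓝 (1 - 0)) :=
      tendsto_const_nhds.sub hJ
    filter_upwards [hlim.eventually (eventually_gt_nhds (by rwa [sub_zero]))] with x hx
    refine hx.trans_le ?_
    rw [one_sub_div (hTpos x).ne']
    exact div_le_div_of_nonneg_right (by linarith [hlow x]) (hTpos x).le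
  · obtain ⟨s, ⟨hs0, hs1⟩, hsc⟩ := exists_rpow_lt_of_one_lt k hc
    have hlim := (hT s hs0).add (hT.tendsto_comp_mul_div hTpos hJ (sub_pos.2 hs1))
    rw [add_zero] at hlim
    filter_upwards [hlim.eventually (eventually_lt_nhds hsc)] with x hx
    refine lt_of_le_of_lt ?_ hx
    rw [← add_div]
    exact div_le_div_of_nonneg_right (hup s x) (hTpos x).le

end RegVary

lemma tendsto_div_of_forall_le_mul {α : Type*} {l : Filter α} {u v : α → ℝ}
    (hv : ∀ᶠ a in l, 0 < v a) (huv : ∀ s > 1, ∀ᶠ a in l, u a ≤ s * v a ∧ v a ≤ s * u a) :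
    Tendsto (fun a => u a / v a) l (𝓝 1) := by
  refine Metric.tendsto_nhds.2 fun ε hε => ?_
  filter_upwards [hv, huv (1 + ε / 2) (by linarith)] with a hva ⟨hle, hge⟩
  rw [Real.dist_eq, abs_sub_lt_iff, sub_lt_iff_lt_add', sub_lt_comm, lt_div_iff₀ hva,
    div_lt_iff₀ hva]
  constructor <;> nlinarith

noncomputable def tailInv (f : ℝ → ℝ) (ε : ℝ) : ℝ := sInf {x | f x ≤ ε}

section TailInv

variable {f g : ℝ → ℝ} {ε : ℝ}

lemma le_tailInv (hf : Antitone f) (hne : ∃ x, f x ≤ ε) {y : ℝ} (hy : ε < f y) :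
    y ≤ tailInv f ε :=
  le_csInf hne fun _ hx => le_of_not_gt fun hxy => (hf hxy.le).trans hx |>.not_gt hy

-- `sInf` of a set that is not bounded below is `0` in `ℝ`, hence `0 ≤ y`.
lemma tailInv_le {y : ℝ} (hy : f y ≤ ε) (hy0 : 0 ≤ y) : tailInv f ε ≤ y := by
  by_cases hbdd : BddBelow {x | f x ≤ ε}
  · exact csInf_le hbdd hy
  · rwa [tailInv, Real.sInf_of_not_bddBelow hbdd]

lemma tendsto_tailInv (hanti : Antitone f) (hpos : ∀ x, 0 < f x)
    (hzero : Tendsto f atTop (𝓝 0)) : Tendsto (tailInv f) (𝓝[>] 0) atTop := by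
  refine tendsto_atTop.2 fun M => ?_
  filter_upwards [self_mem_nhdsWithin, nhdsWithin_le_nhds (eventually_lt_nhds (hpos M))]
    with ε (hε : 0 < ε) hεM
  exact le_tailInv hanti (hzero.eventually (eventually_le_nhds hε)).exists hεM

lemma eventually_tailInv_le_mul (hanti : Antitone f) (hpos : ∀ x, 0 < f x)
    (hzero : Tendsto f atTop (𝓝 0)) {t s : ℝ} (ht : 0 < t) (hts : t < s)
    (hgf : ∀ᶠ x in atTop, g (t * x) ≤ f x) :
    ∀ᶠ ε in 𝓝[>] 0, tailInv g ε ≤ s * tailInv f ε := by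
  obtain ⟨x₀, hx₀⟩ := hgf.exists_forall_of_atTop
  filter_upwards [self_mem_nhdsWithin, (tendsto_tailInv hanti hpos hzero).eventually_ge_atTop
    (max x₀ 1)] with ε (hε : 0 < ε) hεx₀
  set x := s / t * tailInv f ε
  have hinv_pos : 0 < tailInv f ε := zero_lt_one.trans_le (le_of_max_le_right hεx₀)
  have hinv_lt : tailInv f ε < x := lt_mul_left hinv_pos ((one_lt_div ht).2 hts)
  have hfx : f x ≤ ε := le_of_not_gt fun h =>
    hinv_lt.not_ge (le_tailInv hanti (hzero.eventually (eventually_le_nhds hε)).exists h)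
  have htx : t * x = s * tailInv f ε := by
    simp only [x]
    field_simp
  rw [← htx]
  exact tailInv_le ((hx₀ x ((le_of_max_le_left hεx₀).trans hinv_lt.le)).trans hfx)
    (mul_nonneg ht.le (hinv_pos.trans hinv_lt).le)

end TailInv

lemma tendsto_tailInv_div_tailInv {f g : ℝ → ℝ} {β : ℝ} (hβ : 0 < β)
    (hfanti : Antitone f) (hfpos : ∀ x, 0 < f x) (hfzero : Tendsto f atTop (𝓝 0))
    (hganti : Antitone g) (hgpos : ∀ x, 0 < g x) (hgzero : Tendsto g atTop (𝓝 0))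
    (hg : RegVary g (-β)) (hfg : Tendsto (fun x => f x / g x) atTop (𝓝 1)) :
    Tendsto (fun ε => tailInv f ε / tailInv g ε) (𝓝[>] 0) (𝓝 1) := by
  have hgf : Tendsto (fun x => g x / f x) atTop (𝓝 1) := by
    simpa using hfg.inv₀ one_ne_zero
  have hf : RegVary f (-β) := hg.of_tendsto_div hgpos hfg
  refine tendsto_div_of_forall_le_mul
    ((tendsto_tailInv hganti hgpos hgzero).eventually_gt_atTop 0) fun s hs => ?_
  obtain ⟨t, ht, hts⟩ := exists_between hs
  have ht0 : 0 < t := zero_lt_one.trans ht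
  exact (eventually_tailInv_le_mul hganti hgpos hgzero ht0 hts
      (hf.eventually_comp_mul_le hβ hfpos hgpos hfg ht)).and
    (eventually_tailInv_le_mul hfanti hfpos hfzero ht0 hts
      (hg.eventually_comp_mul_le hβ hgpos hfpos hgf ht))

section VaR

variable {Ω : Type*} [MeasurableSpace Ω] (P : Measure Ω) [IsProbabilityMeasure P]

lemma VaR_eq_tailInv {X : Ω → ℝ} (hX : Measurable X) (α : ℝ) :
    VaR P X α = tailInv (tail P X) (1 - α) := by
  refine congrArg sInf (Set.ext fun x => ?_)
  change α ≤ cdf' P X x ↔ tail P X x ≤ 1 - α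
  rw [tail_eq_one_sub_cdf' P hX]
  constructor <;> intro h <;> linarith

lemma VaR_mixture_eq_tailInv {Ω' : Type*} [MeasurableSpace Ω'] (P' : Measure Ω')
    {X Y : Ω → ℝ} (hX : Measurable X) (hY : Measurable Y) {U : Ω' → ℝ}
    (hU : ∀ x, cdf' P' U x = (cdf' P X x + cdf' P Y x) / 2) (α : ℝ) :
    VaR P' U (1 - (1 - α) / 2) = tailInv (fun x => tail P X x + tail P Y x) (1 - α) := by
  refine congrArg sInf (Set.ext fun x => ?_)
  change 1 - (1 - α) / 2 ≤ cdf' P' U x ↔ tail P X x + tail P Y x ≤ 1 - α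
  rw [hU, tail_eq_one_sub_cdf' P hX, tail_eq_one_sub_cdf' P hY]
  constructor <;> intro h <;> linarith

end VaR

theorem stmt3_general {Ω Ω' : Type*} [MeasurableSpace Ω] [MeasurableSpace Ω']
    (P : Measure Ω) [IsProbabilityMeasure P] (P' : Measure Ω')
    (L S : Ω → ℝ) (U : Ω' → ℝ) (hL : Measurable L) (hS : Measurable S)
    (hLpos : ∀ ω, 0 ≤ L ω) (hSpos : ∀ ω, 0 ≤ S ω)
    (β : ℝ) (hβ : 0 < β)
    (hRVL : RegVary (tail P L) (-β)) (hRVS : RegVary (tail P S) (-β))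
    (hjoint : Tendsto (fun x => (P {ω | x < L ω ∧ x < S ω}).toReal / (tail P L x + tail P S x))
      atTop (𝓝 0))
    (hUcdf : ∀ x, cdf' P' U x = (cdf' P L x + cdf' P S x) / 2) :
    Tendsto (fun α => VaR P (fun ω => L ω + S ω) α / VaR P' U (1 - (1 - α) / 2))
      (𝓝[<] (1 : ℝ)) (𝓝 1) := by
  have hLtail := hRVL.pos_of_antitone (tail_antitone P) (tail_nonneg P)
  have hStail := hRVS.pos_of_antitone (tail_antitone P) (tail_nonneg P)
  have hTpos x : 0 < tail P L x + tail P S x := add_pos (hLtail x) (hStail x)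
  have hTRV := hRVL.add hRVS hLtail hStail
  have hTzero : Tendsto (fun x => tail P L x + tail P S x) atTop (𝓝 0) := by
    simpa using (tendsto_tail_atTop P hL).add (tendsto_tail_atTop P hS)
  have hHT := hTRV.tendsto_div_of_le_add hTpos hjoint (tail_add_tail_le P hS hLpos hSpos)
    (tail_add_le P)
  have hquantile := tendsto_tailInv_div_tailInv hβ (tail_antitone P)
    (fun x => (hLtail x).trans_le (tail_le_tail_add P hSpos x))
    (tendsto_tail_atTop P (hL.add hS))
    ((tail_antitone P).add (tail_antitone P)) hTpos hTzero hTRV hHT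
  have hflip : Tendsto (fun α : ℝ => 1 - α) (𝓝[<] 1) (𝓝[>] 0) :=
    (Filter.map_subLeft_nhdsLT (c := (1 : ℝ)) (a := 1)).trans_le (by rw [sub_self])
  refine (hquantile.comp hflip).congr fun α => ?_
  rw [Function.comp_apply, VaR_eq_tailInv P (X := fun ω => L ω + S ω) (hL.add hS),
    VaR_mixture_eq_tailInv P P' hL hS hUcdf]

theorem stmt3 {Ω Ω' : Type*} [MeasurableSpace Ω] [MeasurableSpace Ω']
    (P : Measure Ω) [IsProbabilityMeasure P] (P' : Measure Ω') [IsProbabilityMeasure P']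
    (L S : Ω → ℝ) (U : Ω' → ℝ) (hL : Measurable L) (hS : Measurable S) (hU : Measurable U)
    (hLpos : ∀ ω, 0 ≤ L ω) (hSpos : ∀ ω, 0 ≤ S ω)
    (β : ℝ) (hβ : 0 < β)
    (hRVL : RegVary (tail P L) (-β)) (hRVS : RegVary (tail P S) (-β))
    (hjoint : Tendsto (fun x => (P {ω | x < L ω ∧ x < S ω}).toReal / (tail P L x + tail P S x))
      atTop (𝓝 0))
    (hUcdf : ∀ x, cdf' P' U x = (cdf' P L x + cdf' P S x) / 2) :
    Tendsto (fun α => VaR P (fun ω => L ω + S ω) α / VaR P' U (1 - (1 - α) / 2))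
      (𝓝[<] (1 : ℝ)) (𝓝 1) :=
  stmt3_general P P' L S U hL hS hLpos hSpos β hβ hRVL hRVS hjoint hUcdf
end

section
/- Let (L, S) be non-negative random variables on a standard Borel space with L \in RV_{-\beta}, S \in RV_{-\gamma}, \beta + 1 < \gamma. Assume the regular conditional distribution F_L(\cdot | S = s) has positive, non-increasing, continuous density f_L(\cdot | S = s) on [x_0,\infty), uniformly satisfying ess sup_s sup_{t \in K} |f_L(tx | S=s)/f_L(x | S=s) - t^{-\beta-1}| \to 0 for every compact K \subset (0,1], and E[S^\eta | L = x] \le C for all x \ge x_0 with some \eta > \gamma - \beta. Then (F_{L+S}(x) - F_L(x))/f_L(x) \sim -K(x) as x \to \infty, where K(x) = E[S | L = x]. -/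
open MeasureTheory ProbabilityTheory Filter Topology

open Set

/-!
Let `μ` be the law of `S` and `I x = ∫ s f_L(x | S = s) dμ(s)`. Since `S ≥ 0`,
`F_L(x) - F_{L+S}(x) = P(L ≤ x < L + S)` and `K(x) f_L(x) = I x`, so the claim is
`P(L ≤ x < L + S) / I x → 1`.

On a strip `S ∈ (u, v]` the event lies between `{x - u < L ≤ x}` and `{x - v < L ≤ x}`, whose
probabilities are integrals over the strip of increments of the conditional distribution functions.
By uniform regular variation, on `[(1 - δ)x, x]` every conditional density is within a factor
`1 + ε` of its value at `x`; summing over finer and finer strips squeezes the part of the event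
with `S ≤ δx` between `∫_{(0, δx]} s f_L(x | s) dμ(s)` and `1 + ε` times it. The remainder is
negligible against `I x`: the tail of `S` gives `P(S > u) ≤ C u^{-ρ₂}` and, summing dyadically,
`∫_{s > u} s dμ(s) ≤ K u^{1 - ρ₂}`; the conditional densities at `x` are at most `2 / x`; and
uniform regular variation on `[1/2, 1]` gives `I x ≥ c x^{-ρ₁}` by a dyadic argument, where
`β + 1 < ρ₁ < ρ₂ < γ`.
-/

lemma dyadic_induction {X : ℝ} (hX : 0 < X) {p : ℝ → Prop}
    (base : ∀ x, X ≤ x → x < 2 * X → p x) (step : ∀ x, 2 * X ≤ x → p (x / 2) → p x) :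
    ∀ x, X ≤ x → p x := by
  suffices ∀ n : ℕ, ∀ x, X ≤ x → x < 2 ^ n * X → p x by
    intro x hx
    obtain ⟨n, hn⟩ := pow_unbounded_of_one_lt (x / X) one_lt_two
    exact this n x hx (by rwa [div_lt_iff₀ hX] at hn)
  intro n
  induction n with
  | zero => intro x hx hxn; exact base x hx (by linarith)
  | succ n ih =>
    intro x hx hxn
    rcases lt_or_ge x (2 * X) with h | h
    · exact base x hx h
    · exact step x h (ih _ (by linarith) (by rw [pow_succ] at hxn; linarith))

lemma exists_le_mul_rpow_of_two_mul_le {f : ℝ → ℝ} {X ρ : ℝ} (hX : 0 < X) (hρ : 0 ≤ ρ)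
    (hf : AntitoneOn f (Ici X)) (hdouble : ∀ x, X ≤ x → f (2 * x) ≤ 2 ^ (-ρ) * f x) :
    ∃ C, ∀ x, X ≤ x → f x ≤ C * x ^ (-ρ) := by
  refine ⟨|f X| * (2 * X) ^ ρ, dyadic_induction hX (fun x hx hx2 => ?_) fun x hx ih => ?_⟩
  · have hx0 : 0 < x := hX.trans_le hx
    have h1 : 1 ≤ (2 * X) ^ ρ * x ^ (-ρ) := by
      rw [Real.rpow_neg hx0.le, ← div_eq_mul_inv, ← Real.div_rpow (by positivity) hx0.le]
      exact Real.one_le_rpow ((one_le_div hx0).2 hx2.le) hρ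
    calc f x ≤ |f X| := (hf (mem_Ici.2 le_rfl) (mem_Ici.2 hx) hx).trans (le_abs_self _)
      _ ≤ |f X| * ((2 * X) ^ ρ * x ^ (-ρ)) := le_mul_of_one_le_right (abs_nonneg _) h1
      _ = _ := by ring
  · have h := hdouble (x / 2) (by linarith)
    rw [mul_div_cancel₀ x two_ne_zero] at h
    calc f x ≤ 2 ^ (-ρ) * f (x / 2) := h
      _ ≤ 2 ^ (-ρ) * (|f X| * (2 * X) ^ ρ * (x / 2) ^ (-ρ)) := by gcongr
      _ = |f X| * (2 * X) ^ ρ * x ^ (-ρ) := by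
        rw [Real.div_rpow (by linarith) zero_le_two]
        field_simp

lemma exists_mul_rpow_le_of_le_two_rpow_mul {f : ℝ → ℝ} {X ρ : ℝ} (hX : 0 < X) (hρ : 0 ≤ ρ)
    (hfX : 0 < f X) (hcmp : ∀ x, X ≤ x → ∀ t ∈ Icc (1 / 2 : ℝ) 1, f (t * x) ≤ 2 ^ ρ * f x) :
    ∃ c > 0, ∀ x, X ≤ x → c * x ^ (-ρ) ≤ f x := by
  have h2 : (2 : ℝ) ^ (-ρ) * 2 ^ ρ = 1 := by rw [← Real.rpow_add two_pos]; simp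
  refine ⟨2 ^ (-ρ) * f X * X ^ ρ, by positivity,
    dyadic_induction hX (fun x hx hx2 => ?_) fun x hx ih => ?_⟩
  · have hx0 : 0 < x := hX.trans_le hx
    have h := hcmp x hx (X / x) ⟨by rw [le_div_iff₀ hx0]; linarith, (div_le_one hx0).2 hx⟩
    rw [div_mul_cancel₀ X hx0.ne'] at h
    have h1 : X ^ ρ * x ^ (-ρ) ≤ 1 := by
      rw [Real.rpow_neg hx0.le, ← div_eq_mul_inv, ← Real.div_rpow hX.le hx0.le]
      exact Real.rpow_le_one (by positivity) ((div_le_one hx0).2 hx) hρ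
    calc 2 ^ (-ρ) * f X * X ^ ρ * x ^ (-ρ) = 2 ^ (-ρ) * f X * (X ^ ρ * x ^ (-ρ)) := by ring
      _ ≤ 2 ^ (-ρ) * f X := mul_le_of_le_one_right (by positivity) h1
      _ ≤ 2 ^ (-ρ) * (2 ^ ρ * f x) := by gcongr
      _ = f x := by rw [← mul_assoc, h2, one_mul]
  · have h := hcmp x (by linarith) (1 / 2) ⟨le_rfl, by norm_num⟩
    rw [one_div_mul_eq_div] at h
    calc 2 ^ (-ρ) * f X * X ^ ρ * x ^ (-ρ)
        = 2 ^ (-ρ) * (2 ^ (-ρ) * f X * X ^ ρ * (x / 2) ^ (-ρ)) := by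
          rw [Real.div_rpow (by linarith) zero_le_two]
          field_simp
      _ ≤ 2 ^ (-ρ) * f (x / 2) := by gcongr
      _ ≤ 2 ^ (-ρ) * (2 ^ ρ * f x) := by gcongr
      _ = f x := by rw [← mul_assoc, h2, one_mul]

lemma eventually_mul_rpow_le_mul_rpow {ρ₁ ρ₂ c : ℝ} (hρ : ρ₁ < ρ₂) (hc : 0 < c) (K : ℝ) :
    ∀ᶠ x in atTop, K * x ^ (-ρ₂) ≤ c * x ^ (-ρ₁) := by
  have hlim : Tendsto (fun x : ℝ => K * x ^ (-(ρ₂ - ρ₁))) atTop (𝓝 0) := by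
    simpa using (tendsto_rpow_neg_atTop (sub_pos.2 hρ)).const_mul K
  filter_upwards [hlim.eventually_le_const hc, eventually_gt_atTop 0] with x hx hx0
  calc K * x ^ (-ρ₂) = K * x ^ (-(ρ₂ - ρ₁)) * x ^ (-ρ₁) := by
        rw [mul_assoc, ← Real.rpow_add hx0]; ring_nf
    _ ≤ c * x ^ (-ρ₁) := by gcongr

lemma RegVary.pos {f : ℝ → ℝ} {k : ℝ} (hf : RegVary f k) (hmono : Antitone f)
    (hnn : ∀ x, 0 ≤ f x) (y : ℝ) : 0 < f y := by
  by_contra! hy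
  have hzero : ∀ᶠ x in atTop, f (2 * x) / f x = 0 := by
    filter_upwards [eventually_ge_atTop y] with x hx
    rw [le_antisymm ((hmono hx).trans hy) (hnn x), div_zero]
  have h := tendsto_nhds_unique (tendsto_const_nhds.congr' (EventuallyEq.symm hzero)) (hf 2 two_pos)
  exact (Real.rpow_pos_of_pos two_pos k).ne' h.symm

lemma RegVary.eventually_two_mul_le {f : ℝ → ℝ} {γ ρ : ℝ} (hf : RegVary f (-γ))
    (hpos : ∀ x, 0 < f x) (hργ : ρ < γ) : ∀ᶠ x in atTop, f (2 * x) ≤ 2 ^ (-ρ) * f x := by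
  have hlt : (2 : ℝ) ^ (-γ) < 2 ^ (-ρ) := Real.rpow_lt_rpow_of_exponent_lt one_lt_two (by linarith)
  filter_upwards [(hf 2 two_pos).eventually_le_const hlt] with x hx
  rwa [div_le_iff₀ (hpos x)] at hx

lemma RegVary.exists_le_mul_rpow {f : ℝ → ℝ} {γ ρ : ℝ} (hf : RegVary f (-γ)) (hmono : Antitone f)
    (hnn : ∀ x, 0 ≤ f x) (hρ : 0 ≤ ρ) (hργ : ρ < γ) :
    ∃ X > 0, ∃ C, ∀ x, X ≤ x → f x ≤ C * x ^ (-ρ) := by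
  obtain ⟨X, hX⟩ := eventually_atTop.1 (hf.eventually_two_mul_le (hf.pos hmono hnn) hργ)
  obtain ⟨C, hC⟩ := exists_le_mul_rpow_of_two_mul_le (lt_max_of_lt_right one_pos) hρ
    (hmono.antitoneOn _) fun x hx => hX x ((le_max_left X 1).trans hx)
  exact ⟨max X 1, lt_max_of_lt_right one_pos, C, hC⟩

lemma increment_bounds_of_antitone_density {F f : ℝ → ℝ} {x₀ a b : ℝ}
    (hf : ∀ x y, x₀ ≤ x → x ≤ y → f y ≤ f x)
    (hF : ∀ x, x₀ ≤ x → F x = F x₀ + ∫ y in x₀..x, f y) (ha : x₀ ≤ a) (hab : a ≤ b) :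
    (b - a) * f b ≤ F b - F a ∧ F b - F a ≤ (b - a) * f a := by
  have hanti : AntitoneOn f (Ici x₀) := fun x hx y _ hxy => hf x y hx hxy
  have hint : ∀ u v, x₀ ≤ u → u ≤ v → IntervalIntegrable f volume u v := fun u v hu huv =>
    (hanti.mono (by rw [uIcc_of_le huv]; exact fun y hy => hu.trans hy.1)).intervalIntegrable
  have hb := ha.trans hab
  have heq : F b - F a = ∫ y in a..b, f y := by
    rw [hF b hb, hF a ha, ← intervalIntegral.integral_interval_sub_left (hint x₀ b le_rfl hb)
      (hint x₀ a le_rfl ha)]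
    ring
  rw [heq]
  constructor
  · calc (b - a) * f b = ∫ _ in a..b, f b := by simp
      _ ≤ ∫ y in a..b, f y := intervalIntegral.integral_mono_on hab intervalIntegrable_const
          (hint a b ha hab) fun y hy => hf y b (ha.trans hy.1) hy.2
  · calc ∫ y in a..b, f y ≤ ∫ _ in a..b, f a := intervalIntegral.integral_mono_on hab
          (hint a b ha hab) intervalIntegrable_const fun y hy => hf a y ha hy.1
      _ = (b - a) * f a := by simp

def IsIntervalAdditive (Φ : ℝ → ℝ → ℝ) : Prop :=
  ∀ a b c, a ≤ b → b ≤ c → Φ a c = Φ a b + Φ b c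

lemma IsIntervalAdditive.sub {Φ Ψ : ℝ → ℝ → ℝ} (hΦ : IsIntervalAdditive Φ)
    (hΨ : IsIntervalAdditive Ψ) : IsIntervalAdditive fun a b => Φ a b - Ψ a b :=
  fun a b c hab hbc => by dsimp only; rw [hΦ a b c hab hbc, hΨ a b c hab hbc]; ring

lemma isIntervalAdditive_measureReal_Ioc (ν : Measure ℝ) [IsFiniteMeasure ν] :
    IsIntervalAdditive fun a b => ν.real (Ioc a b) :=
  fun _ _ _ hab hbc => by
    dsimp only
    rw [← Ioc_union_Ioc_eq_Ioc hab hbc,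
      measureReal_union (Ioc_disjoint_Ioc_of_le le_rfl) measurableSet_Ioc]

lemma isIntervalAdditive_setIntegral_Ioc {μ : Measure ℝ} {g : ℝ → ℝ} (hg : Integrable g μ) :
    IsIntervalAdditive fun a b => ∫ s in Ioc a b, g s ∂μ :=
  fun _ _ _ hab hbc => by
    dsimp only
    rw [← Ioc_union_Ioc_eq_Ioc hab hbc, setIntegral_union (Ioc_disjoint_Ioc_of_le le_rfl)
      measurableSet_Ioc hg.integrableOn hg.integrableOn]

lemma IsIntervalAdditive.nonneg_of_forall_cell {Φ : ℝ → ℝ → ℝ} (hΦ : IsIntervalAdditive Φ)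
    {h : ℝ} (hh : 0 ≤ h) (n : ℕ) (hcell : ∀ k < n, 0 ≤ Φ (k * h) ((k + 1) * h)) :
    0 ≤ Φ 0 (n * h) := by
  induction n with
  | zero =>
    have := hΦ 0 0 0 le_rfl le_rfl
    simp only [Nat.cast_zero, zero_mul] at this ⊢
    linarith
  | succ n ih =>
    push_cast
    rw [hΦ 0 (n * h) ((n + 1) * h) (by positivity) (by nlinarith)]
    exact add_nonneg (ih fun k hk => hcell k (by omega)) (hcell n (by omega))

lemma Ioi_subset_iUnion_Ioc_two_pow_mul {m : ℝ} (hm : 0 < m) :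
    Ioi m ⊆ ⋃ k : ℕ, Ioc (2 ^ k * m) (2 ^ (k + 1) * m) := by
  intro s hs
  obtain ⟨n, hn1, hn2⟩ := exists_mem_Ioc_zpow (div_pos (hm.trans hs) hm) one_lt_two
  have hn : 0 ≤ n := by
    by_contra! h
    have : (2 : ℝ) ^ (n + 1) ≤ 1 := zpow_le_one_of_nonpos₀ one_le_two (by omega)
    linarith [(one_lt_div hm).2 (mem_Ioi.1 hs)]
  lift n to ℕ using hn
  refine mem_iUnion.2 ⟨n, ?_, ?_⟩
  · simpa [lt_div_iff₀ hm] using hn1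
  · rw [div_le_iff₀ hm] at hn2
    exact_mod_cast hn2

lemma setLIntegral_Ioi_le_tsum_two_pow_mul (μ : Measure ℝ) {m : ℝ} (hm : 0 < m) :
    ∫⁻ s in Ioi m, ENNReal.ofReal s ∂μ ≤
      ∑' k : ℕ, ENNReal.ofReal (2 ^ (k + 1) * m) * μ (Ioi (2 ^ k * m)) :=
  calc ∫⁻ s in Ioi m, ENNReal.ofReal s ∂μ
      ≤ ∫⁻ s in ⋃ k : ℕ, Ioc (2 ^ k * m) (2 ^ (k + 1) * m), ENNReal.ofReal s ∂μ :=
        lintegral_mono_set (Ioi_subset_iUnion_Ioc_two_pow_mul hm)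
    _ ≤ ∑' k : ℕ, ∫⁻ s in Ioc (2 ^ k * m) (2 ^ (k + 1) * m), ENNReal.ofReal s ∂μ :=
        lintegral_iUnion_le _ _
    _ ≤ _ := ENNReal.tsum_le_tsum fun k => calc
        ∫⁻ s in Ioc (2 ^ k * m) (2 ^ (k + 1) * m), ENNReal.ofReal s ∂μ
          ≤ ∫⁻ _ in Ioc (2 ^ k * m) (2 ^ (k + 1) * m), ENNReal.ofReal (2 ^ (k + 1) * m) ∂μ :=
            setLIntegral_mono measurable_const fun s hs => ENNReal.ofReal_le_ofReal hs.2
        _ ≤ ENNReal.ofReal (2 ^ (k + 1) * m) * μ (Ioi (2 ^ k * m)) := by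
            rw [setLIntegral_const]; gcongr; exact Ioc_subset_Ioi_self

lemma integrableOn_Ioi_and_setIntegral_Ioi_le {μ : Measure ℝ} [IsFiniteMeasure μ] {X C ρ : ℝ}
    (hX : 0 < X) (hρ : 1 < ρ) (htail : ∀ u, X ≤ u → μ.real (Ioi u) ≤ C * u ^ (-ρ)) :
    ∃ K, ∀ m, X ≤ m → IntegrableOn (fun s => s) (Ioi m) μ ∧
      ∫ s in Ioi m, s ∂μ ≤ K * m ^ (1 - ρ) := by
  set q : ℝ := 2 ^ (1 - ρ)
  have hq0 : 0 < q := by positivity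
  have hq1 : q < 1 := Real.rpow_lt_one_of_one_lt_of_neg one_lt_two (by linarith)
  have hC : 0 ≤ C := by
    have := measureReal_nonneg.trans (htail X le_rfl)
    exact nonneg_of_mul_nonneg_left this (by positivity)
  refine ⟨2 * C / (1 - q), fun m hm => ?_⟩
  have hm0 : 0 < m := hX.trans_le hm
  have hpiece : ∀ k : ℕ, ENNReal.ofReal (2 ^ (k + 1) * m) * μ (Ioi (2 ^ k * m)) ≤
      ENNReal.ofReal (2 * C * m ^ (1 - ρ) * q ^ k) := by
    intro k
    have h2k : (0 : ℝ) < 2 ^ k := by positivity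
    have hpow : 2 ^ (k + 1) * m * (C * (2 ^ k * m) ^ (-ρ)) = 2 * C * m ^ (1 - ρ) * q ^ k := by
      rw [Real.rpow_pow_comm zero_le_two, Real.mul_rpow h2k.le hm0.le, sub_eq_add_neg,
        Real.rpow_add h2k, Real.rpow_add hm0, Real.rpow_one, Real.rpow_one, pow_succ]
      ring
    rw [← hpow, ENNReal.ofReal_mul (p := 2 ^ (k + 1) * m) (by positivity), ← ofReal_measureReal]
    gcongr
    exact htail _ (hm.trans (le_mul_of_one_le_left hm0.le (one_le_pow₀ one_le_two)))
  have hgeom :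
      HasSum (fun k : ℕ => 2 * C * m ^ (1 - ρ) * q ^ k) (2 * C / (1 - q) * m ^ (1 - ρ)) := by
    have h := (hasSum_geometric_of_lt_one hq0.le hq1).mul_left (2 * C * m ^ (1 - ρ))
    rwa [show 2 * C * m ^ (1 - ρ) * (1 - q)⁻¹ = 2 * C / (1 - q) * m ^ (1 - ρ) by ring] at h
  have hlint :
      ∫⁻ s in Ioi m, ENNReal.ofReal s ∂μ ≤ ENNReal.ofReal (2 * C / (1 - q) * m ^ (1 - ρ)) := by
    refine (setLIntegral_Ioi_le_tsum_two_pow_mul μ hm0).trans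
      ((ENNReal.tsum_le_tsum hpiece).trans ?_)
    rw [← ENNReal.ofReal_tsum_of_nonneg (fun k => by positivity) hgeom.summable, hgeom.tsum_eq]
  have hnn : 0 ≤ᵐ[μ.restrict (Ioi m)] fun s => s :=
    (ae_restrict_mem measurableSet_Ioi).mono fun s hs => hm0.le.trans (le_of_lt hs)
  refine ⟨⟨aestronglyMeasurable_id, (hasFiniteIntegral_iff_ofReal hnn).2
    (hlint.trans_lt ENNReal.ofReal_lt_top)⟩, ?_⟩
  rw [integral_eq_lintegral_of_nonneg_ae hnn aestronglyMeasurable_id]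
  exact ENNReal.toReal_le_of_le_ofReal (by positivity) hlint

lemma RegVary.measure_Ioi_ne_zero {μ : Measure ℝ} [IsFiniteMeasure μ] {k : ℝ}
    (hf : RegVary (fun u => μ.real (Ioi u)) k) (a : ℝ) : μ (Ioi a) ≠ 0 :=
  (measureReal_ne_zero_iff (measure_ne_top _ _)).1 (hf.pos
    (fun _ _ h => measureReal_mono (Ioi_subset_Ioi h)) (fun _ => measureReal_nonneg) a).ne'

lemma RegVary.exists_tail_bounds {μ : Measure ℝ} [IsFiniteMeasure μ] {γ ρ : ℝ}
    (hf : RegVary (fun u => μ.real (Ioi u)) (-γ)) (hρ : 1 < ρ) (hργ : ρ < γ) :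
    ∃ X C K, (∀ u, X ≤ u → μ.real (Ioi u) ≤ C * u ^ (-ρ)) ∧
      ∀ m, X ≤ m → IntegrableOn (fun s => s) (Ioi m) μ ∧ ∫ s in Ioi m, s ∂μ ≤ K * m ^ (1 - ρ) := by
  obtain ⟨X, hX, C, htail⟩ := hf.exists_le_mul_rpow
    (fun _ _ h => measureReal_mono (Ioi_subset_Ioi h)) (fun _ => measureReal_nonneg)
    (by linarith) hργ
  obtain ⟨K, hK⟩ := integrableOn_Ioi_and_setIntegral_Ioi_le hX hρ htail
  exact ⟨X, C, K, htail, hK⟩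

lemma integrable_id_of_integrableOn_Ioi {μ : Measure ℝ} [IsFiniteMeasure μ] {X : ℝ}
    (hnonneg : ∀ᵐ s ∂μ, 0 ≤ s) (h : IntegrableOn (fun s => s) (Ioi X) μ) :
    Integrable (fun s => s) μ := by
  rw [← integrableOn_univ, ← Iic_union_Ioi (a := X)]
  refine IntegrableOn.union ((integrable_const X).mono' aestronglyMeasurable_id ?_) h
  filter_upwards [ae_restrict_of_ae hnonneg, ae_restrict_mem measurableSet_Iic] with s h0 hs
  rwa [Real.norm_eq_abs, abs_of_nonneg h0]

lemma ae_nonneg_and_le_one_of_setIntegral {α : Type*} [MeasurableSpace α] {μ : Measure α}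
    [IsFiniteMeasure μ] {g : α → ℝ} (hg : Integrable g μ)
    (h : ∀ B, MeasurableSet B → 0 ≤ ∫ x in B, g x ∂μ ∧ ∫ x in B, g x ∂μ ≤ μ.real B) :
    ∀ᵐ x ∂μ, 0 ≤ g x ∧ g x ≤ 1 := by
  have h0 : 0 ≤ᵐ[μ] g := ae_nonneg_of_forall_setIntegral_nonneg hg fun B hB _ => (h B hB).1
  have h1 : 0 ≤ᵐ[μ] fun x => 1 - g x :=
    ae_nonneg_of_forall_setIntegral_nonneg ((integrable_const 1).sub hg) fun B hB _ => by
      rw [integral_sub (integrable_const 1).integrableOn hg.integrableOn, setIntegral_const,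
        smul_eq_mul, mul_one]
      exact sub_nonneg.2 (h B hB).2
  filter_upwards [h0, h1] with x hx0 hx1
  exact ⟨hx0, sub_nonneg.1 hx1⟩

def UniformRegVary (μ : Measure ℝ) (f : ℝ → ℝ → ℝ) (k : ℝ) : Prop :=
  ∀ K : Set ℝ, K ⊆ Ioc 0 1 → IsCompact K → ∀ ε > 0, ∃ X₀ : ℝ, ∀ x ≥ X₀,
    ∀ᵐ s ∂μ, ∀ t ∈ K, |f s (t * x) / f s x - t ^ k| ≤ ε

section UniformVariation

variable {μ : Measure ℝ} {f : ℝ → ℝ → ℝ} {x₀ k : ℝ}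

lemma eventually_ae_le_mul_of_rpow_lt (hf : UniformRegVary μ f k)
    (hpos : ∀ᵐ s ∂μ, ∀ x, x₀ ≤ x → 0 < f s x) (hk : k ≤ 0) {a c : ℝ} (ha : 0 < a)
    (hac : a ^ k < c) :
    ∀ᶠ x in atTop, ∀ᵐ s ∂μ, ∀ t ∈ Icc a 1, f s (t * x) ≤ c * f s x := by
  obtain ⟨X₀, hX₀⟩ := hf (Icc a 1) (fun t ht => ⟨ha.trans_le ht.1, ht.2⟩) isCompact_Icc _
    (sub_pos.2 hac)
  filter_upwards [eventually_ge_atTop X₀, eventually_ge_atTop x₀] with x hX hx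
  filter_upwards [hX₀ x hX, hpos] with s hs hsp t ht
  have hta : t ^ k ≤ a ^ k := Real.rpow_le_rpow_of_nonpos ha ht.1 hk
  rw [← div_le_iff₀ (hsp x hx)]
  linarith [(abs_le.1 (hs t ht)).2]

lemma exists_forall_Icc_le_mul (hf : UniformRegVary μ f k)
    (hpos : ∀ᵐ s ∂μ, ∀ x, x₀ ≤ x → 0 < f s x) (hk : k ≤ 0) {M : ℝ} (hM : 1 < M) :
    ∃ δ ∈ Ioo (0 : ℝ) 1, ∀ᶠ x in atTop, ∀ᵐ s ∂μ, ∀ a ∈ Icc (x - δ * x) x, f s a ≤ M * f s x := by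
  have hcont : Tendsto (fun δ : ℝ => (1 - δ) ^ k) (𝓝[>] 0) (𝓝 1) := by
    have h1 : Tendsto (fun δ : ℝ => 1 - δ) (𝓝 0) (𝓝 (1 - 0)) := tendsto_const_nhds.sub tendsto_id
    rw [sub_zero] at h1
    have h2 := (Real.continuousAt_rpow_const 1 k (Or.inl one_ne_zero)).tendsto.comp
      (h1.mono_left (nhdsWithin_le_nhds (s := Ioi 0)))
    rwa [Real.one_rpow] at h2
  obtain ⟨δ, hδM, hδ⟩ := ((hcont.eventually (gt_mem_nhds hM)).and (Ioo_mem_nhdsGT one_pos)).exists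
  refine ⟨δ, hδ, ?_⟩
  filter_upwards [eventually_ae_le_mul_of_rpow_lt hf hpos hk (sub_pos.2 hδ.2) hδM,
    eventually_gt_atTop 0] with x hx hx0
  filter_upwards [hx] with s hs a ha
  have h := hs (a / x) ⟨by rw [le_div_iff₀ hx0]; linarith [ha.1], (div_le_one hx0).2 ha.2⟩
  rwa [div_mul_cancel₀ a hx0.ne'] at h

lemma eventually_ae_le_two_rpow_mul (hf : UniformRegVary μ f k)
    (hpos : ∀ᵐ s ∂μ, ∀ x, x₀ ≤ x → 0 < f s x) (hk : k ≤ 0) {ρ : ℝ} (hρ : -k < ρ) :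
    ∀ᶠ x in atTop, ∀ᵐ s ∂μ, ∀ t ∈ Icc (1 / 2 : ℝ) 1, f s (t * x) ≤ 2 ^ ρ * f s x := by
  refine eventually_ae_le_mul_of_rpow_lt hf hpos hk (by norm_num) ?_
  rw [one_div, Real.inv_rpow zero_le_two, ← Real.rpow_neg zero_le_two]
  exact Real.rpow_lt_rpow_of_exponent_lt one_lt_two hρ

end UniformVariation

lemma exists_mul_rpow_le_integral_mul {μ : Measure ℝ} {f : ℝ → ℝ → ℝ} {x₀ ρ : ℝ} (hρ : 0 ≤ ρ)
    (hμ : μ (Ioi 0) ≠ 0) (hnonneg : ∀ᵐ s ∂μ, 0 ≤ s) (hpos : ∀ᵐ s ∂μ, ∀ x, x₀ ≤ x → 0 < f s x)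
    (hsfint : ∀ c, x₀ < c → Integrable (fun s => s * f s c) μ)
    (hcmp : ∀ᶠ x in atTop, ∀ᵐ s ∂μ, ∀ t ∈ Icc (1 / 2 : ℝ) 1, f s (t * x) ≤ 2 ^ ρ * f s x) :
    ∃ c > 0, ∀ᶠ x in atTop, c * x ^ (-ρ) ≤ ∫ s, s * f s x ∂μ := by
  obtain ⟨X, hX⟩ := eventually_atTop.1 hcmp
  set X' := max (max X 1) (2 * x₀ + 1)
  have hX'1 : 1 ≤ X' := (le_max_right X 1).trans (le_max_left _ _)
  have hX'x₀ : 2 * x₀ + 1 ≤ X' := le_max_right _ _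
  have hlarge : ∀ x, X' ≤ x → ∀ t ∈ Icc (1 / 2 : ℝ) 1, x₀ < t * x := fun x hx t ht => by
    nlinarith [ht.1]
  have hIX' : 0 < ∫ s, s * f s X' ∂μ := by
    have hx₀ : x₀ < X' := by simpa using hlarge X' le_rfl 1 ⟨by norm_num, le_rfl⟩
    have hnn : 0 ≤ᵐ[μ] fun s => s * f s X' := by
      filter_upwards [hnonneg, hpos] with s h0 hs
      exact mul_nonneg h0 (hs X' hx₀.le).le
    rw [integral_pos_iff_support_of_nonneg_ae hnn (hsfint X' hx₀)]
    refine (pos_iff_ne_zero.2 hμ).trans_le (measure_mono_ae ?_)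
    filter_upwards [hpos] with s hs hs0
    exact (mul_pos (mem_Ioi.1 hs0) (hs X' hx₀.le)).ne'
  obtain ⟨c, hc, hcX⟩ := exists_mul_rpow_le_of_le_two_rpow_mul
    (f := fun x => ∫ s, s * f s x ∂μ) (X := X') (by linarith) hρ hIX'
    fun x hx t ht => by
      have hX_x : X ≤ x := ((le_max_left X 1).trans (le_max_left _ _)).trans hx
      have hx₀ : x₀ < x := by simpa using hlarge x hx 1 ⟨by norm_num, le_rfl⟩
      rw [← integral_const_mul]
      refine integral_mono_ae (hsfint _ (hlarge x hx t ht)) ((hsfint x hx₀).const_mul _) ?_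
      filter_upwards [hX x hX_x, hnonneg] with s hs h0
      calc s * f s (t * x) ≤ s * (2 ^ ρ * f s x) := mul_le_mul_of_nonneg_left (hs t ht) h0
        _ = 2 ^ ρ * (s * f s x) := by ring
  exact ⟨c, hc, eventually_atTop.2 ⟨X', hcX⟩⟩

lemma integrable_mul_of_ae_le_inv_sub {μ : Measure ℝ} {f : ℝ → ℝ → ℝ} {x₀ : ℝ}
    (hid : Integrable (fun s => s) μ) (hnonneg : ∀ᵐ s ∂μ, 0 ≤ s)
    (hpos : ∀ᵐ s ∂μ, ∀ x, x₀ ≤ x → 0 < f s x)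
    (hfint : ∀ c, x₀ < c → Integrable (f · c) μ)
    (hdens : ∀ a c, x₀ < a → a < c → ∀ᵐ s ∂μ, f s c ≤ (c - a)⁻¹) :
    ∀ c, x₀ < c → Integrable (fun s => s * f s c) μ := fun c hc => by
  refine (hid.const_mul (c - (x₀ + c) / 2)⁻¹).mono'
    (hid.aestronglyMeasurable.mul (hfint c hc).aestronglyMeasurable) ?_
  filter_upwards [hdens ((x₀ + c) / 2) c (by linarith) (by linarith), hnonneg, hpos] with s h1 h0 hp
  rw [Real.norm_eq_abs, abs_of_nonneg (mul_nonneg h0 (hp c hc.le).le), mul_comm]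
  exact mul_le_mul_of_nonneg_right h1 h0

lemma eventually_tails_le_mul_integral {μ : Measure ℝ} {f : ℝ → ℝ → ℝ}
    {x₀ X C K c ρ₁ ρ₂ : ℝ} (hρ : ρ₁ < ρ₂) (hc : 0 < c)
    (hI : ∀ᶠ x in atTop, c * x ^ (-ρ₁) ≤ ∫ s, s * f s x ∂μ)
    (htail : ∀ u, X ≤ u → μ.real (Ioi u) ≤ C * u ^ (-ρ₂))
    (hJ : ∀ m, X ≤ m → IntegrableOn (fun s => s) (Ioi m) μ ∧
      ∫ s in Ioi m, s ∂μ ≤ K * m ^ (1 - ρ₂))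
    (hnonneg : ∀ᵐ s ∂μ, 0 ≤ s) (hsfint : ∀ c, x₀ < c → Integrable (fun s => s * f s c) μ)
    (hdens : ∀ a c, x₀ < a → a < c → ∀ᵐ s ∂μ, f s c ≤ (c - a)⁻¹) :
    ∀ δ > 0, ∀ ε > 0, ∀ᶠ x in atTop,
      μ.real (Ioi (δ * x)) ≤ ε * ∫ s, s * f s x ∂μ ∧
      ∫ s in Ioi (δ * x), s * f s x ∂μ ≤ ε * ∫ s, s * f s x ∂μ := by
  intro δ hδ ε hε
  filter_upwards [hI, eventually_mul_rpow_le_mul_rpow hρ (mul_pos hε hc) (C * δ ^ (-ρ₂)),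
    eventually_mul_rpow_le_mul_rpow hρ (mul_pos hε hc) (2 * K * δ ^ (1 - ρ₂)),
    eventually_ge_atTop (X / δ), eventually_gt_atTop (2 * x₀), eventually_gt_atTop 0]
    with x hIx h1 h2 hXx hx₀ hx0
  have hδx : X ≤ δ * x := by rwa [div_le_iff₀ hδ, mul_comm] at hXx
  have hεI : ε * c * x ^ (-ρ₁) ≤ ε * ∫ s, s * f s x ∂μ := by
    rw [mul_assoc]; exact mul_le_mul_of_nonneg_left hIx hε.le
  obtain ⟨hint, hbound⟩ := hJ _ hδx
  constructor
  · calc μ.real (Ioi (δ * x)) ≤ C * (δ * x) ^ (-ρ₂) := htail _ hδx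
      _ = C * δ ^ (-ρ₂) * x ^ (-ρ₂) := by rw [Real.mul_rpow hδ.le hx0.le]; ring
      _ ≤ _ := h1.trans hεI
  · calc ∫ s in Ioi (δ * x), s * f s x ∂μ ≤ ∫ s in Ioi (δ * x), (x - x / 2)⁻¹ * s ∂μ := by
          refine setIntegral_mono_ae_restrict (hsfint x (by linarith)).integrableOn
            (hint.const_mul _) (ae_restrict_of_ae ?_)
          filter_upwards [hdens (x / 2) x (by linarith) (by linarith), hnonneg] with s hs h0
          rw [mul_comm s]
          exact mul_le_mul_of_nonneg_right hs h0
      _ = (x - x / 2)⁻¹ * ∫ s in Ioi (δ * x), s ∂μ := integral_const_mul _ _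
      _ ≤ (x - x / 2)⁻¹ * (K * (δ * x) ^ (1 - ρ₂)) :=
          mul_le_mul_of_nonneg_left hbound (inv_nonneg.2 (by linarith))
      _ = 2 * K * δ ^ (1 - ρ₂) * x ^ (-ρ₂) := by
          rw [Real.mul_rpow hδ.le hx0.le, Real.rpow_sub hx0, Real.rpow_one, Real.rpow_neg hx0.le]
          field_simp
          ring
      _ ≤ _ := h2.trans hεI

def IsCondCDF {Ω : Type*} [MeasurableSpace Ω] (P : Measure Ω) (L S : Ω → ℝ)
    (F : ℝ → ℝ → ℝ) : Prop :=
  ∀ x : ℝ, ∀ B : Set ℝ, MeasurableSet B →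
    P.real {ω | L ω ≤ x ∧ S ω ∈ B} = ∫ s in B, F s x ∂(P.map S)

lemma tail_eq_measureReal_map {Ω : Type*} [MeasurableSpace Ω] (P : Measure Ω) {X : Ω → ℝ}
    (hX : Measurable X) : tail P X = fun x => (P.map X).real (Ioi x) :=
  funext fun x => by rw [map_measureReal_apply hX measurableSet_Ioi]; rfl

lemma cdf'_pos {Ω : Type*} [MeasurableSpace Ω] {P : Measure Ω} {L : Ω → ℝ} {fL : ℝ → ℝ} {x₀ : ℝ}
    (hfLpos : ∀ x, x₀ ≤ x → 0 < fL x) (hfLmono : ∀ x y, x₀ ≤ x → x ≤ y → fL y ≤ fL x)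
    (hfLdens : ∀ x, x₀ ≤ x → cdf' P L x = cdf' P L x₀ + ∫ y in x₀..x, fL y) {c : ℝ}
    (hc : x₀ < c) : 0 < cdf' P L c := by
  have hanti : AntitoneOn fL (uIcc x₀ c) := by
    rw [uIcc_of_le hc.le]
    exact fun x hx y _ hxy => hfLmono x y hx.1 hxy
  rw [hfLdens c hc.le]
  have := intervalIntegral.intervalIntegral_pos_of_pos_on hanti.intervalIntegrable
    (fun y hy => hfLpos y hy.1.le) hc
  have : 0 ≤ cdf' P L x₀ := ENNReal.toReal_nonneg
  linarith

lemma integrable_condCDF {Ω : Type*} [MeasurableSpace Ω] {P : Measure Ω} {L S : Ω → ℝ}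
    {F : ℝ → ℝ → ℝ} (hcond : IsCondCDF P L S F) {x₀ : ℝ}
    (hcdf : ∀ c, x₀ < c → 0 < cdf' P L c) :
    ∀ c, x₀ < c → Integrable (F · c) (P.map S) := fun c hc => by
  refine Integrable.of_integral_ne_zero ?_
  rw [← setIntegral_univ, ← hcond c univ MeasurableSet.univ]
  simpa [cdf', measureReal_def] using (hcdf c hc).ne'

section Conditional

variable {Ω : Type*} [MeasurableSpace Ω] {P : Measure Ω} [IsFiniteMeasure P] {L S : Ω → ℝ}
  {F : ℝ → ℝ → ℝ}

lemma ae_density_le_inv_sub (hS : Measurable S) (hcond : IsCondCDF P L S F)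
    {f : ℝ → ℝ → ℝ} {x₀ : ℝ} (hFint : ∀ c, x₀ < c → Integrable (F · c) (P.map S))
    (hinc : ∀ᵐ s ∂(P.map S), ∀ a b, x₀ ≤ a → a ≤ b →
      (b - a) * f s b ≤ F s b - F s a ∧ F s b - F s a ≤ (b - a) * f s a) :
    ∀ a c, x₀ < a → a < c → ∀ᵐ s ∂(P.map S), f s c ≤ (c - a)⁻¹ := by
  have hunit : ∀ b, x₀ < b → ∀ᵐ s ∂(P.map S), 0 ≤ F s b ∧ F s b ≤ 1 := fun b hb =>
    ae_nonneg_and_le_one_of_setIntegral (hFint b hb) fun B hB => by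
      rw [← hcond b B hB, map_measureReal_apply hS hB]
      exact ⟨measureReal_nonneg, measureReal_mono fun ω hω => hω.2⟩
  intro a c ha hac
  filter_upwards [hinc, hunit a ha, hunit c (ha.trans hac)] with s hs ha1 hc1
  rw [← one_div, le_div_iff₀ (sub_pos.2 hac)]
  linarith [(hs a c ha.le hac.le).1]

lemma measureReal_inter_preimage_eq_setIntegral (hL : Measurable L) (hS : Measurable S)
    (hcond : IsCondCDF P L S F)
    {a x : ℝ} (hax : a ≤ x) (hFa : Integrable (F · a) (P.map S))
    (hFx : Integrable (F · x) (P.map S)) {B : Set ℝ} (hB : MeasurableSet B) :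
    P.real ({ω | a < L ω ∧ L ω ≤ x} ∩ S ⁻¹' B) = ∫ s in B, (F s x - F s a) ∂(P.map S) := by
  have hsub : {ω | L ω ≤ a ∧ S ω ∈ B} ⊆ {ω | L ω ≤ x ∧ S ω ∈ B} :=
    fun ω hω => ⟨hω.1.trans hax, hω.2⟩
  have hdiff : {ω | L ω ≤ x ∧ S ω ∈ B} \ {ω | L ω ≤ a ∧ S ω ∈ B} =
      {ω | a < L ω ∧ L ω ≤ x} ∩ S ⁻¹' B := by
    ext ω
    simp only [Set.mem_sdiff, mem_ofPred_eq, mem_inter_iff, mem_preimage]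
    constructor
    · rintro ⟨⟨h1, h2⟩, h3⟩
      exact ⟨⟨not_le.1 fun h => h3 ⟨h, h2⟩, h1⟩, h2⟩
    · rintro ⟨⟨h1, h2⟩, h3⟩
      exact ⟨⟨h2, h3⟩, fun h => h1.not_ge h.1⟩
  rw [← hdiff, measureReal_sdiff hsub ((measurableSet_le hL measurable_const).inter (hS hB)),
    hcond _ _ hB, hcond _ _ hB, integral_sub hFx.integrableOn hFa.integrableOn]

lemma measureReal_strip_bounds (hL : Measurable L) (hS : Measurable S)
    (hcond : IsCondCDF P L S F)
    {w : ℝ → ℝ} {x D M : ℝ} (hFint : ∀ a ∈ Icc (x - D) x, Integrable (F · a) (P.map S))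
    (hw : Integrable w (P.map S))
    (hinc : ∀ a ∈ Icc (x - D) x, ∀ᵐ s ∂(P.map S),
      (x - a) * w s ≤ F s x - F s a ∧ F s x - F s a ≤ M * ((x - a) * w s))
    {u v : ℝ} (hu : 0 ≤ u) (huv : u ≤ v) (hvD : v ≤ D) :
    u * ∫ s in Ioc u v, w s ∂(P.map S) ≤
        P.real ({ω | L ω ≤ x ∧ x < L ω + S ω} ∩ S ⁻¹' Ioc u v) ∧
      P.real ({ω | L ω ≤ x ∧ x < L ω + S ω} ∩ S ⁻¹' Ioc u v) ≤
        M * v * ∫ s in Ioc u v, w s ∂(P.map S) := by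
  have hmem : ∀ r, 0 ≤ r → r ≤ D → x - r ∈ Icc (x - D) x := fun r hr hrD =>
    ⟨by linarith, by linarith⟩
  have hFx : Integrable (F · x) (P.map S) :=
    hFint x ⟨by linarith [hu.trans (huv.trans hvD)], le_rfl⟩
  constructor
  · calc u * ∫ s in Ioc u v, w s ∂(P.map S) = ∫ s in Ioc u v, (x - (x - u)) * w s ∂(P.map S) := by
          rw [integral_const_mul]; ring_nf
      _ ≤ ∫ s in Ioc u v, (F s x - F s (x - u)) ∂(P.map S) :=
          setIntegral_mono_ae_restrict (hw.const_mul _).integrableOn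
            (hFx.sub (hFint _ (hmem u hu (huv.trans hvD)))).integrableOn
            (ae_restrict_of_ae ((hinc _ (hmem u hu (huv.trans hvD))).mono fun s hs => hs.1))
      _ = P.real ({ω | x - u < L ω ∧ L ω ≤ x} ∩ S ⁻¹' Ioc u v) :=
          (measureReal_inter_preimage_eq_setIntegral hL hS hcond (by linarith)
            (hFint _ (hmem u hu (huv.trans hvD))) hFx measurableSet_Ioc).symm
      _ ≤ P.real ({ω | L ω ≤ x ∧ x < L ω + S ω} ∩ S ⁻¹' Ioc u v) :=
          measureReal_mono fun ω hω => ⟨⟨hω.1.2, by linarith [hω.1.1, hω.2.1]⟩, hω.2⟩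
  · calc P.real ({ω | L ω ≤ x ∧ x < L ω + S ω} ∩ S ⁻¹' Ioc u v)
        ≤ P.real ({ω | x - v < L ω ∧ L ω ≤ x} ∩ S ⁻¹' Ioc u v) :=
          measureReal_mono fun ω hω => ⟨⟨by linarith [hω.1.2, hω.2.2], hω.1.1⟩, hω.2⟩
      _ = ∫ s in Ioc u v, (F s x - F s (x - v)) ∂(P.map S) :=
          measureReal_inter_preimage_eq_setIntegral hL hS hcond (by linarith)
            (hFint _ (hmem v (hu.trans huv) hvD)) hFx measurableSet_Ioc
      _ ≤ ∫ s in Ioc u v, M * ((x - (x - v)) * w s) ∂(P.map S) :=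
          setIntegral_mono_ae_restrict (hFx.sub (hFint _ (hmem v (hu.trans huv) hvD))).integrableOn
            ((hw.const_mul _).const_mul _).integrableOn
            (ae_restrict_of_ae ((hinc _ (hmem v (hu.trans huv) hvD)).mono fun s hs => hs.2))
      _ = M * v * ∫ s in Ioc u v, w s ∂(P.map S) := by
          rw [integral_const_mul, integral_const_mul]; ring_nf

lemma measureReal_cell_bounds (hL : Measurable L) (hS : Measurable S)
    (hcond : IsCondCDF P L S F) {w : ℝ → ℝ} {x D M : ℝ} (hM : 0 ≤ M)
    (hFint : ∀ a ∈ Icc (x - D) x, Integrable (F · a) (P.map S))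
    (hw : Integrable w (P.map S)) (hsw : Integrable (fun s => s * w s) (P.map S))
    (hw0 : ∀ᵐ s ∂(P.map S), 0 ≤ w s)
    (hinc : ∀ a ∈ Icc (x - D) x, ∀ᵐ s ∂(P.map S),
      (x - a) * w s ≤ F s x - F s a ∧ F s x - F s a ≤ M * ((x - a) * w s))
    {u v h : ℝ} (hu : 0 ≤ u) (huv : u ≤ v) (hvD : v ≤ D) (hvh : v ≤ u + h) :
    ∫ s in Ioc u v, (s * w s - h * w s) ∂(P.map S) ≤
        P.real ({ω | L ω ≤ x ∧ x < L ω + S ω} ∩ S ⁻¹' Ioc u v) ∧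
      P.real ({ω | L ω ≤ x ∧ x < L ω + S ω} ∩ S ⁻¹' Ioc u v) ≤
        ∫ s in Ioc u v, M * (s * w s + h * w s) ∂(P.map S) := by
  obtain ⟨hlow, hupp⟩ := measureReal_strip_bounds hL hS hcond hFint hw hinc hu huv hvD
  constructor
  · refine le_trans ?_ hlow
    rw [← integral_const_mul]
    refine setIntegral_mono_ae_restrict (hsw.sub (hw.const_mul h)).integrableOn
      (hw.const_mul _).integrableOn ?_
    filter_upwards [ae_restrict_of_ae hw0, ae_restrict_mem measurableSet_Ioc] with s hws hs
    calc s * w s - h * w s = (s - h) * w s := by ring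
      _ ≤ u * w s := mul_le_mul_of_nonneg_right (by linarith [hs.2]) hws
  · refine hupp.trans ?_
    rw [← integral_const_mul]
    refine setIntegral_mono_ae_restrict (hw.const_mul _).integrableOn
      ((hsw.add (hw.const_mul h)).const_mul M).integrableOn ?_
    filter_upwards [ae_restrict_of_ae hw0, ae_restrict_mem measurableSet_Ioc] with s hws hs
    calc M * v * w s = M * (v * w s) := by ring
      _ ≤ M * ((s + h) * w s) := by gcongr; linarith [hs.1]
      _ = M * (s * w s + h * w s) := by ring

lemma riemann_sum_bounds (hL : Measurable L) (hS : Measurable S)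
    (hcond : IsCondCDF P L S F)
    {w : ℝ → ℝ} {x D M : ℝ} (hD : 0 ≤ D) (hM : 0 ≤ M)
    (hFint : ∀ a ∈ Icc (x - D) x, Integrable (F · a) (P.map S))
    (hw : Integrable w (P.map S)) (hsw : Integrable (fun s => s * w s) (P.map S))
    (hw0 : ∀ᵐ s ∂(P.map S), 0 ≤ w s)
    (hinc : ∀ a ∈ Icc (x - D) x, ∀ᵐ s ∂(P.map S),
      (x - a) * w s ≤ F s x - F s a ∧ F s x - F s a ≤ M * ((x - a) * w s))
    {n : ℕ} (hn : 0 < n) :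
    ∫ s in Ioc 0 D, s * w s ∂(P.map S) - D / n * ∫ s in Ioc 0 D, w s ∂(P.map S) ≤
        P.real ({ω | L ω ≤ x ∧ x < L ω + S ω} ∩ S ⁻¹' Ioc 0 D) ∧
      P.real ({ω | L ω ≤ x ∧ x < L ω + S ω} ∩ S ⁻¹' Ioc 0 D) ≤
        M * (∫ s in Ioc 0 D, s * w s ∂(P.map S) + D / n * ∫ s in Ioc 0 D, w s ∂(P.map S)) := by
  set E := {ω | L ω ≤ x ∧ x < L ω + S ω}
  set h := D / n
  have hh : 0 ≤ h := by positivity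
  have hnh : (n : ℝ) * h = D := mul_div_cancel₀ D (by positivity)
  set π := (P.restrict E).map S
  have hπ : ∀ a b, π.real (Ioc a b) = P.real (E ∩ S ⁻¹' Ioc a b) := fun a b => by
    rw [map_measureReal_apply hS measurableSet_Ioc,
      measureReal_restrict_apply (hS measurableSet_Ioc), inter_comm]
  have hcell : ∀ k : ℕ, k < n → 0 ≤ (k : ℝ) * h ∧ (k : ℝ) * h ≤ ((k : ℝ) + 1) * h ∧
      ((k : ℝ) + 1) * h ≤ D ∧ ((k : ℝ) + 1) * h ≤ (k : ℝ) * h + h :=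
    fun k hk => ⟨by positivity, by nlinarith, by rw [← hnh]; gcongr; exact_mod_cast hk, by linarith⟩
  have hlow := (isIntervalAdditive_measureReal_Ioc π).sub (isIntervalAdditive_setIntegral_Ioc
    (hsw.sub (hw.const_mul h))) |>.nonneg_of_forall_cell hh n fun k hk => by
      obtain ⟨h1, h2, h3, h4⟩ := hcell k hk
      rw [sub_nonneg, hπ]
      exact (measureReal_cell_bounds hL hS hcond hM hFint hw hsw hw0 hinc h1 h2 h3 h4).1
  have hupp := (isIntervalAdditive_setIntegral_Ioc ((hsw.add (hw.const_mul h)).const_mul M)).sub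
    (isIntervalAdditive_measureReal_Ioc π) |>.nonneg_of_forall_cell hh n fun k hk => by
      obtain ⟨h1, h2, h3, h4⟩ := hcell k hk
      rw [sub_nonneg, hπ]
      exact (measureReal_cell_bounds hL hS hcond hM hFint hw hsw hw0 hinc h1 h2 h3 h4).2
  simp only [hnh, sub_nonneg, hπ, Pi.sub_apply, Pi.add_apply] at hlow hupp
  rw [integral_sub hsw.integrableOn (hw.const_mul h).integrableOn, integral_const_mul] at hlow
  rw [integral_const_mul, integral_add hsw.integrableOn (hw.const_mul h).integrableOn,
    integral_const_mul] at hupp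
  exact ⟨hlow, hupp⟩

lemma setIntegral_le_measureReal_le (hL : Measurable L) (hS : Measurable S)
    (hcond : IsCondCDF P L S F)
    {w : ℝ → ℝ} {x D M : ℝ} (hD : 0 ≤ D) (hM : 0 ≤ M)
    (hFint : ∀ a ∈ Icc (x - D) x, Integrable (F · a) (P.map S))
    (hw : Integrable w (P.map S)) (hsw : Integrable (fun s => s * w s) (P.map S))
    (hw0 : ∀ᵐ s ∂(P.map S), 0 ≤ w s)
    (hinc : ∀ a ∈ Icc (x - D) x, ∀ᵐ s ∂(P.map S),
      (x - a) * w s ≤ F s x - F s a ∧ F s x - F s a ≤ M * ((x - a) * w s)) :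
    ∫ s in Ioc 0 D, s * w s ∂(P.map S) ≤ P.real ({ω | L ω ≤ x ∧ x < L ω + S ω} ∩ S ⁻¹' Ioc 0 D) ∧
      P.real ({ω | L ω ≤ x ∧ x < L ω + S ω} ∩ S ⁻¹' Ioc 0 D) ≤
        M * ∫ s in Ioc 0 D, s * w s ∂(P.map S) := by
  have hmesh : Tendsto (fun n : ℕ => D / n * ∫ s in Ioc 0 D, w s ∂(P.map S)) atTop (𝓝 0) := by
    simpa using (tendsto_const_div_atTop_nhds_zero_nat D).mul_const (∫ s in Ioc 0 D, w s ∂(P.map S))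
  have hbounds := (eventually_gt_atTop 0).mono fun n hn =>
    riemann_sum_bounds hL hS hcond hD hM hFint hw hsw hw0 hinc hn
  constructor
  · exact le_of_tendsto (by simpa using hmesh.const_sub (∫ s in Ioc 0 D, s * w s ∂(P.map S)))
      (hbounds.mono fun n hn => hn.1)
  · exact ge_of_tendsto
      (by simpa using (hmesh.const_add (∫ s in Ioc 0 D, s * w s ∂(P.map S))).const_mul M)
      (hbounds.mono fun n hn => hn.2)

lemma integral_sub_le_measureReal_le (hL : Measurable L) (hS : Measurable S)
    (hcond : IsCondCDF P L S F)
    (hnonneg : ∀ᵐ s ∂(P.map S), 0 ≤ s)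
    {w : ℝ → ℝ} {x D M : ℝ} (hD : 0 ≤ D) (hM : 0 ≤ M)
    (hFint : ∀ a ∈ Icc (x - D) x, Integrable (F · a) (P.map S))
    (hw : Integrable w (P.map S)) (hsw : Integrable (fun s => s * w s) (P.map S))
    (hw0 : ∀ᵐ s ∂(P.map S), 0 ≤ w s)
    (hinc : ∀ a ∈ Icc (x - D) x, ∀ᵐ s ∂(P.map S),
      (x - a) * w s ≤ F s x - F s a ∧ F s x - F s a ≤ M * ((x - a) * w s)) :
    ∫ s, s * w s ∂(P.map S) - ∫ s in Ioi D, s * w s ∂(P.map S) ≤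
        P.real {ω | L ω ≤ x ∧ x < L ω + S ω} ∧
      P.real {ω | L ω ≤ x ∧ x < L ω + S ω} ≤
        M * ∫ s, s * w s ∂(P.map S) + (P.map S).real (Ioi D) := by
  set E := {ω | L ω ≤ x ∧ x < L ω + S ω}
  obtain ⟨hlow, hupp⟩ := setIntegral_le_measureReal_le hL hS hcond hD hM hFint hw hsw hw0 hinc
  have hsplit : ∫ s, s * w s ∂(P.map S) =
      ∫ s in Ioc 0 D, s * w s ∂(P.map S) + ∫ s in Ioi D, s * w s ∂(P.map S) := by
    rw [← setIntegral_union Ioc_disjoint_Ioi_same measurableSet_Ioi hsw.integrableOn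
      hsw.integrableOn, Ioc_union_Ioi_eq_Ioi hD, setIntegral_eq_integral_of_ae_compl_eq_zero]
    filter_upwards [hnonneg] with s hs hs'
    rw [le_antisymm (not_lt.1 hs') hs, zero_mul]
  have htail : 0 ≤ ∫ s in Ioi D, s * w s ∂(P.map S) := setIntegral_nonneg_of_ae_restrict <|
    ae_restrict_of_ae <| by filter_upwards [hnonneg, hw0] with s h1 h2 using mul_nonneg h1 h2
  have hcover : E ⊆ (E ∩ S ⁻¹' Ioc 0 D) ∪ S ⁻¹' Ioi D := fun ω hω => by
    rcases le_or_gt (S ω) D with h | h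
    · exact Or.inl ⟨hω, by linarith [hω.1, hω.2], h⟩
    · exact Or.inr h
  constructor
  · linarith [measureReal_mono (μ := P) (inter_subset_left : E ∩ S ⁻¹' Ioc 0 D ⊆ E)]
  · calc P.real E ≤ P.real (E ∩ S ⁻¹' Ioc 0 D) + P.real (S ⁻¹' Ioi D) :=
          (measureReal_mono hcover).trans (measureReal_union_le _ _)
      _ ≤ M * ∫ s, s * w s ∂(P.map S) + (P.map S).real (Ioi D) := by
          rw [map_measureReal_apply hS measurableSet_Ioi]
          nlinarith

lemma tendsto_measureReal_div_integral (hL : Measurable L) (hS : Measurable S)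
    (hcond : IsCondCDF P L S F)
    (hnonneg : ∀ᵐ s ∂(P.map S), 0 ≤ s) {f : ℝ → ℝ → ℝ} {x₀ : ℝ}
    (hFint : ∀ c, x₀ < c → Integrable (F · c) (P.map S))
    (hfint : ∀ c, x₀ < c → Integrable (f · c) (P.map S))
    (hsfint : ∀ c, x₀ < c → Integrable (fun s => s * f s c) (P.map S))
    (hpos : ∀ᵐ s ∂(P.map S), ∀ x, x₀ ≤ x → 0 < f s x)
    (hinc : ∀ᵐ s ∂(P.map S), ∀ a b, x₀ ≤ a → a ≤ b →
      (b - a) * f s b ≤ F s b - F s a ∧ F s b - F s a ≤ (b - a) * f s a)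
    (hnear : ∀ M > 1, ∃ δ ∈ Ioo (0 : ℝ) 1, ∀ᶠ x in atTop, ∀ᵐ s ∂(P.map S),
      ∀ a ∈ Icc (x - δ * x) x, f s a ≤ M * f s x)
    (hIpos : ∀ᶠ x in atTop, 0 < ∫ s, s * f s x ∂(P.map S))
    (htail : ∀ δ > 0, ∀ ε > 0, ∀ᶠ x in atTop,
      (P.map S).real (Ioi (δ * x)) ≤ ε * ∫ s, s * f s x ∂(P.map S) ∧
      ∫ s in Ioi (δ * x), s * f s x ∂(P.map S) ≤ ε * ∫ s, s * f s x ∂(P.map S)) :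
    Tendsto (fun x => P.real {ω | L ω ≤ x ∧ x < L ω + S ω} / ∫ s, s * f s x ∂(P.map S))
      atTop (𝓝 1) := by
  have key : ∀ ε > 0, ∀ᶠ x in atTop,
      (1 - ε) * ∫ s, s * f s x ∂(P.map S) ≤ P.real {ω | L ω ≤ x ∧ x < L ω + S ω} ∧
      P.real {ω | L ω ≤ x ∧ x < L ω + S ω} ≤ (1 + 2 * ε) * ∫ s, s * f s x ∂(P.map S) := by
    intro ε hε
    obtain ⟨δ, ⟨hδ0, hδ1⟩, hδ⟩ := hnear (1 + ε) (by linarith)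
    filter_upwards [hδ, htail δ hδ0 ε hε, eventually_gt_atTop (x₀ / (1 - δ)),
      eventually_gt_atTop 0] with x hnear_x ⟨htail1, htail2⟩ hx₀ hx0
    have hxδ : x₀ < x - δ * x := by rw [div_lt_iff₀ (by linarith)] at hx₀; linarith
    have hmem : ∀ a ∈ Icc (x - δ * x) x, x₀ < a := fun a ha => hxδ.trans_le ha.1
    have hx : x₀ < x := hmem x ⟨by nlinarith, le_rfl⟩
    have hinc_x : ∀ a ∈ Icc (x - δ * x) x, ∀ᵐ s ∂(P.map S),
        (x - a) * f s x ≤ F s x - F s a ∧ F s x - F s a ≤ (1 + ε) * ((x - a) * f s x) :=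
      fun a ha => by
        filter_upwards [hinc, hnear_x] with s hs hsn
        obtain ⟨h1, h2⟩ := hs a x (hmem a ha).le ha.2
        refine ⟨h1, h2.trans ?_⟩
        calc (x - a) * f s a ≤ (x - a) * ((1 + ε) * f s x) :=
              mul_le_mul_of_nonneg_left (hsn a ha) (by linarith [ha.2])
          _ = (1 + ε) * ((x - a) * f s x) := by ring
    obtain ⟨h1, h2⟩ := integral_sub_le_measureReal_le hL hS hcond hnonneg (w := (f · x))
      (by positivity) (by linarith) (fun a ha => hFint a (hmem a ha)) (hfint x hx) (hsfint x hx)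
      (hpos.mono fun s hs => (hs x hx.le).le) hinc_x
    constructor <;> nlinarith
  rw [tendsto_order]
  constructor
  · intro l hl
    filter_upwards [key ((1 - l) / 2) (by linarith), hIpos] with x hx hI
    rw [lt_div_iff₀ hI]
    nlinarith
  · intro u hu
    filter_upwards [key ((u - 1) / 4) (by linarith), hIpos] with x hx hI
    rw [div_lt_iff₀ hI]
    nlinarith

lemma cdf'_add_sub_cdf' (hL : Measurable L) (hS : Measurable S) (hS0 : ∀ ω, 0 ≤ S ω) (x : ℝ) :
    cdf' P (fun ω => L ω + S ω) x - cdf' P L x = -P.real {ω | L ω ≤ x ∧ x < L ω + S ω} := by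
  have hsub : {ω | L ω + S ω ≤ x} ⊆ {ω | L ω ≤ x} := fun ω hω => by
    have := hS0 ω
    simp only [mem_ofPred_eq] at hω ⊢
    linarith
  have hdiff : {ω | L ω ≤ x} \ {ω | L ω + S ω ≤ x} = {ω | L ω ≤ x ∧ x < L ω + S ω} := by
    ext ω
    simp [not_le]
  rw [← hdiff, measureReal_sdiff hsub (measurableSet_le (hL.add hS) measurable_const), cdf', cdf',
    measureReal_def, measureReal_def]
  ring

end Conditional

theorem stmt16_general {Ω : Type*} [MeasurableSpace Ω] (P : Measure Ω) [IsProbabilityMeasure P]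
    (L S : Ω → ℝ) (hL : Measurable L) (hS : Measurable S)
    (hSpos : ∀ ω, 0 ≤ S ω)
    (β γ x₀ : ℝ) (hβ : 0 < β) (hβγ : β + 1 < γ)
    (hRVS : RegVary (tail P S) (-γ))
    (FLc fLc : ℝ → ℝ → ℝ) (fL : ℝ → ℝ)
    -- FLc is a regular conditional distribution function of L given S
    (hcond : ∀ x : ℝ, ∀ B : Set ℝ, MeasurableSet B →
      (P {ω | L ω ≤ x ∧ S ω ∈ B}).toReal = ∫ s in B, FLc s x ∂(P.map S))
    -- condition [E]: the conditional densities are positive, non-increasing, continuous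
    (hE : ∀ᵐ s ∂(P.map S),
      (∀ x, x₀ ≤ x → 0 < fLc s x) ∧
      (∀ x y, x₀ ≤ x → x ≤ y → fLc s y ≤ fLc s x) ∧
      ContinuousOn (fLc s) (Set.Ici x₀) ∧
      (∀ x, x₀ ≤ x → FLc s x = FLc s x₀ + ∫ y in x₀..x, fLc s y))
    -- fL is the (positive, non-increasing) marginal density of L on [x₀, ∞)
    (hfLpos : ∀ x, x₀ ≤ x → 0 < fL x)
    (hfLmono : ∀ x y, x₀ ≤ x → x ≤ y → fL y ≤ fL x)
    (hfLdens : ∀ x, x₀ ≤ x → cdf' P L x = cdf' P L x₀ + ∫ y in x₀..x, fL y)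
    (hmarg : ∀ x, x₀ ≤ x → fL x = ∫ s, fLc s x ∂(P.map S))
    -- condition [F]: uniform regular variation of the conditional densities ...
    (hF1 : ∀ K : Set ℝ, K ⊆ Set.Ioc 0 1 → IsCompact K → ∀ ε > 0, ∃ X₀ : ℝ, ∀ x ≥ X₀,
      ∀ᵐ s ∂(P.map S), ∀ t ∈ K, |fLc s (t * x) / fLc s x - t ^ (-β - 1)| ≤ ε)
 :
    Tendsto (fun x => ((cdf' P (fun ω => L ω + S ω) x - cdf' P L x) / fL x) /
        (-(∫ s, s * (fLc s x / fL x) ∂(P.map S)))) atTop (𝓝 1) := by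
  set μ := P.map S
  have hnonneg : ∀ᵐ s ∂μ, 0 ≤ s :=
    (ae_map_iff hS.aemeasurable measurableSet_Ici).2 (ae_of_all _ hSpos)
  have hpos : ∀ᵐ s ∂μ, ∀ x, x₀ ≤ x → 0 < fLc s x := hE.mono fun s hs => hs.1
  have hinc : ∀ᵐ s ∂μ, ∀ a b, x₀ ≤ a → a ≤ b →
      (b - a) * fLc s b ≤ FLc s b - FLc s a ∧ FLc s b - FLc s a ≤ (b - a) * fLc s a :=
    hE.mono fun s hs _ _ ha hab => increment_bounds_of_antitone_density hs.2.1 hs.2.2.2 ha hab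
  have hFint := integrable_condCDF hcond fun c hc => cdf'_pos hfLpos hfLmono hfLdens hc
  have hfint : ∀ c, x₀ < c → Integrable (fLc · c) μ := fun c hc =>
    .of_integral_ne_zero (hmarg c hc.le ▸ (hfLpos c hc.le).ne')
  have hdens := ae_density_le_inv_sub hS hcond hFint hinc
  rw [tail_eq_measureReal_map P hS] at hRVS
  obtain ⟨ρ₁, ρ₂, hβρ₁, hρ₁₂, hρ₂γ, hρ₂⟩ :
      ∃ ρ₁ ρ₂ : ℝ, -(-β - 1) < ρ₁ ∧ ρ₁ < ρ₂ ∧ ρ₂ < γ ∧ 1 < ρ₂ :=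
    ⟨(2 * (β + 1) + γ) / 3, (β + 1 + 2 * γ) / 3, by linarith, by linarith, by linarith, by linarith⟩
  obtain ⟨X, C, K, htail, hK⟩ := hRVS.exists_tail_bounds hρ₂ hρ₂γ
  have hsfint := integrable_mul_of_ae_le_inv_sub
    (integrable_id_of_integrableOn_Ioi hnonneg (hK X le_rfl).1) hnonneg hpos hfint hdens
  obtain ⟨c, hc, hI⟩ := exists_mul_rpow_le_integral_mul (by linarith) (hRVS.measure_Ioi_ne_zero 0)
    hnonneg hpos hsfint (eventually_ae_le_two_rpow_mul hF1 hpos (by linarith) hβρ₁)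
  have hIpos : ∀ᶠ x in atTop, 0 < ∫ s, s * fLc s x ∂μ := by
    filter_upwards [hI, eventually_gt_atTop 0] with x hx hx0
    exact (mul_pos hc (Real.rpow_pos_of_pos hx0 _)).trans_le hx
  refine (tendsto_measureReal_div_integral hL hS hcond hnonneg hFint hfint hsfint hpos hinc
    (fun M hM => exists_forall_Icc_le_mul hF1 hpos (by linarith) hM) hIpos
    (eventually_tails_le_mul_integral hρ₁₂ hc hI htail hK hnonneg hsfint hdens)).congr' ?_
  filter_upwards [eventually_ge_atTop x₀] with x hx
  simp_rw [← mul_div_assoc]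
  rw [integral_div, cdf'_add_sub_cdf' hL hS hSpos, neg_div, neg_div_neg_eq,
    div_div_div_cancel_right₀ (hfLpos x hx).ne']

theorem stmt16 {Ω : Type*} [MeasurableSpace Ω] (P : Measure Ω) [IsProbabilityMeasure P]
    (L S : Ω → ℝ) (hL : Measurable L) (hS : Measurable S)
    (hLpos : ∀ ω, 0 ≤ L ω) (hSpos : ∀ ω, 0 ≤ S ω)
    (β γ x₀ C η : ℝ) (hβ : 0 < β) (hβγ : β + 1 < γ) (hx₀ : 0 < x₀) (hη : γ - β < η)
    (hRVL : RegVary (tail P L) (-β)) (hRVS : RegVary (tail P S) (-γ))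
    (FLc fLc : ℝ → ℝ → ℝ) (fL : ℝ → ℝ)
    -- FLc is a regular conditional distribution function of L given S
    (hcond : ∀ x : ℝ, ∀ B : Set ℝ, MeasurableSet B →
      (P {ω | L ω ≤ x ∧ S ω ∈ B}).toReal = ∫ s in B, FLc s x ∂(P.map S))
    -- condition [E]: the conditional densities are positive, non-increasing, continuous
    (hE : ∀ᵐ s ∂(P.map S),
      (∀ x, x₀ ≤ x → 0 < fLc s x) ∧
      (∀ x y, x₀ ≤ x → x ≤ y → fLc s y ≤ fLc s x) ∧
      ContinuousOn (fLc s) (Set.Ici x₀) ∧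
      (∀ x, x₀ ≤ x → FLc s x = FLc s x₀ + ∫ y in x₀..x, fLc s y))
    -- fL is the (positive, non-increasing) marginal density of L on [x₀, ∞)
    (hfLpos : ∀ x, x₀ ≤ x → 0 < fL x)
    (hfLmono : ∀ x y, x₀ ≤ x → x ≤ y → fL y ≤ fL x)
    (hfLdens : ∀ x, x₀ ≤ x → cdf' P L x = cdf' P L x₀ + ∫ y in x₀..x, fL y)
    (hmarg : ∀ x, x₀ ≤ x → fL x = ∫ s, fLc s x ∂(P.map S))
    -- condition [F]: uniform regular variation of the conditional densities ...
    (hF1 : ∀ K : Set ℝ, K ⊆ Set.Ioc 0 1 → IsCompact K → ∀ ε > 0, ∃ X₀ : ℝ, ∀ x ≥ X₀,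
      ∀ᵐ s ∂(P.map S), ∀ t ∈ K, |fLc s (t * x) / fLc s x - t ^ (-β - 1)| ≤ ε)
    -- ... and the conditional moment bound E[S^η | L = x] ≤ C
    (hF2 : ∀ x, x₀ ≤ x → ∫ s, s ^ η * (fLc s x / fL x) ∂(P.map S) ≤ C)
 :
    Tendsto (fun x => ((cdf' P (fun ω => L ω + S ω) x - cdf' P L x) / fL x) /
        (-(∫ s, s * (fLc s x / fL x) ∂(P.map S)))) atTop (𝓝 1) :=
  stmt16_general P L S hL hS hSpos β γ x₀ hβ hβγ hRVS FLc fLc fL hcond hE hfLpos hfLmono hfLdens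
    hmarg hF1
end
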